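/- For every x > 0, 0 < x²(log x − Ψ(x) − 1/(2x)) ≤ 1/12, where Ψ is the digamma function. -/

import Mathlib

/-!
Write `R(x) = log x - Ψ(x) - 1/(2x)`. Since `Ψ(x+1) = Ψ(x) + 1/x`, the difference
`R(x) - R(x+1)` is the error `E(x)` of the trapezoidal rule for `∫_x^{x+1} dt/t`, and
log-convexity of `Γ` squeezes `Ψ(x+1)` between `log x` and `log (x+1)`, so `R → 0` at infinity
and `R(x) = ∑ₙ E(x+n)`. Both `E(t)` and `(1/t² - 1/(t+1)²)/12 - E(t)` have negative derivative
and tend to `0`, hence are positive; so the terms `E(x+n)` are positive and their upper bounds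
telescope to `1/(12x²)`.
-/

open Real

/-- The digamma function `Ψ = Γ'/Γ`, as the derivative of `log ∘ Γ`. -/
noncomputable def digamma (x : ℝ) : ℝ := deriv (fun y => log (Gamma y)) x

open Set Filter Topology

theorem Antitone.hasSum_sub_succ {f : ℕ → ℝ} (hf : Antitone f)
    (hlim : Tendsto f atTop (𝓝 0)) : HasSum (fun n => f n - f (n + 1)) (f 0) := by
  refine (hasSum_iff_tendsto_nat_of_nonneg (fun n => sub_nonneg.2 (hf n.le_succ)) _).2 ?_
  simp_rw [Finset.sum_range_sub']
  simpa using hlim.const_sub (f 0)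

theorem pos_of_hasDerivAt_neg_of_tendsto_zero {g g' : ℝ → ℝ} {a t : ℝ}
    (hg : ∀ s ∈ Ioi a, HasDerivAt g (g' s) s) (hg' : ∀ s ∈ Ioi a, g' s < 0)
    (hlim : Tendsto g atTop (𝓝 0)) (ht : a < t) : 0 < g t := by
  have hanti : StrictAntiOn g (Ioi a) := by
    refine strictAntiOn_of_hasDerivWithinAt_neg (f' := g') (convex_Ioi a)
      (fun s hs => (hg s hs).continuousAt.continuousWithinAt) ?_ ?_ <;> rw [interior_Ioi]
    exacts [fun s hs => (hg s hs).hasDerivWithinAt, hg']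
  have ht' : a < t + 1 := by linarith
  have hnonneg : 0 ≤ g (t + 1) := by
    refine le_of_tendsto hlim ?_
    filter_upwards [eventually_gt_atTop (t + 1)] with s hs
    exact (hanti ht' (ht'.trans hs) hs).le
  exact hnonneg.trans_lt (hanti ht ht' (lt_add_one t))

noncomputable def trapezoidError (t : ℝ) : ℝ :=
  (t⁻¹ + (t + 1)⁻¹) / 2 - (log (t + 1) - log t)

theorem hasDerivAt_trapezoidError {t : ℝ} (ht : 0 < t) :
    HasDerivAt trapezoidError (-(1 / (2 * t ^ 2 * (t + 1) ^ 2))) t := by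
  have ht1 : 0 < t + 1 := by linarith
  have hinv := hasDerivAt_inv ht.ne'
  have hinv1 := (hasDerivAt_inv ht1.ne').comp_add_const t 1
  have hlog := hasDerivAt_log ht.ne'
  have hlog1 := (hasDerivAt_log ht1.ne').comp_add_const t 1
  refine (((hinv.add hinv1).div_const 2).sub (hlog1.sub hlog)).congr_deriv ?_
  field_simp
  ring

theorem tendsto_trapezoidError : Tendsto trapezoidError atTop (𝓝 0) := by
  have hinv1 : Tendsto (fun t : ℝ => (t + 1)⁻¹) atTop (𝓝 0) :=
    tendsto_inv_atTop_zero.comp (tendsto_atTop_add_const_right _ 1 tendsto_id)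
  unfold trapezoidError
  simpa using ((tendsto_inv_atTop_zero.add hinv1).div_const 2).sub (tendsto_log_comp_add_sub_log 1)

theorem trapezoidError_pos {t : ℝ} (ht : 0 < t) : 0 < trapezoidError t :=
  pos_of_hasDerivAt_neg_of_tendsto_zero (fun s hs => hasDerivAt_trapezoidError hs)
    (fun s (hs : 0 < s) => neg_lt_zero.2 (by positivity)) tendsto_trapezoidError ht

theorem trapezoidError_lt {t : ℝ} (ht : 0 < t) :
    trapezoidError t < (t ^ 2)⁻¹ / 12 - ((t + 1) ^ 2)⁻¹ / 12 := by
  let g : ℝ → ℝ := fun s => (s ^ 2)⁻¹ / 12 - ((s + 1) ^ 2)⁻¹ / 12 - trapezoidError s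
  have hg : ∀ s ∈ Ioi (0 : ℝ), HasDerivAt g (-(1 / (6 * s ^ 3 * (s + 1) ^ 3))) s := by
    intro s (hs : 0 < s)
    have hsq := (hasDerivAt_pow 2 s).inv (by positivity)
    have hsq1 := ((hasDerivAt_pow 2 (s + 1)).inv (by positivity)).comp_add_const s 1
    refine ((hsq.div_const 12).sub (hsq1.div_const 12) |>.sub
      (hasDerivAt_trapezoidError hs)).congr_deriv ?_
    field_simp
    ring
  have hlim : Tendsto g atTop (𝓝 0) := by
    have hsq : Tendsto (fun s : ℝ => (s ^ 2)⁻¹) atTop (𝓝 0) :=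
      tendsto_inv_atTop_zero.comp (tendsto_pow_atTop two_ne_zero)
    have hsq1 : Tendsto (fun s : ℝ => ((s + 1) ^ 2)⁻¹) atTop (𝓝 0) :=
      hsq.comp (tendsto_atTop_add_const_right _ 1 tendsto_id)
    simpa using ((hsq.div_const 12).sub (hsq1.div_const 12)).sub tendsto_trapezoidError
  have hpos : 0 < g t := pos_of_hasDerivAt_neg_of_tendsto_zero hg
    (fun s (hs : 0 < s) => neg_lt_zero.2 (by positivity)) hlim ht
  exact sub_pos.1 hpos

theorem differentiableAt_log_Gamma {x : ℝ} (hx : 0 < x) :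
    DifferentiableAt ℝ (fun y => log (Gamma y)) x :=
  (differentiableAt_Gamma fun m => (neg_nonpos.2 m.cast_nonneg).trans_lt hx |>.ne').log
    (Gamma_pos_of_pos hx).ne'

theorem digamma_add_one {x : ℝ} (hx : 0 < x) : digamma (x + 1) = digamma x + x⁻¹ := by
  have hshift : HasDerivAt (fun y => log (Gamma (y + 1))) (digamma (x + 1)) x :=
    (differentiableAt_log_Gamma (by linarith)).hasDerivAt.comp_add_const x 1
  have hsum : HasDerivAt (fun y => log (Gamma (y + 1))) (digamma x + x⁻¹) x := by
    refine ((differentiableAt_log_Gamma hx).hasDerivAt.add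
      (hasDerivAt_log hx.ne')).congr_of_eventuallyEq ?_
    filter_upwards [eventually_gt_nhds hx] with y hy
    rw [Pi.add_apply, Gamma_add_one hy.ne', log_mul hy.ne' (Gamma_pos_of_pos hy).ne', add_comm]
  exact hshift.unique hsum

theorem slope_log_Gamma {x : ℝ} (hx : 0 < x) : slope (log ∘ Gamma) x (x + 1) = log x := by
  rw [slope_def_field, Function.comp_apply, Function.comp_apply, Gamma_add_one hx.ne',
    log_mul hx.ne' (Gamma_pos_of_pos hx).ne']
  ring

theorem digamma_le_log {x : ℝ} (hx : 0 < x) : digamma x ≤ log x :=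
  slope_log_Gamma hx ▸ convexOn_log_Gamma.deriv_le_slope hx (by simp; linarith) (lt_add_one x)
    (differentiableAt_log_Gamma hx)

theorem log_le_digamma_add_one {x : ℝ} (hx : 0 < x) : log x ≤ digamma (x + 1) :=
  slope_log_Gamma hx ▸ convexOn_log_Gamma.slope_le_deriv hx (by simp; linarith) (lt_add_one x)
    (differentiableAt_log_Gamma (by linarith))

noncomputable def digammaRemainder (x : ℝ) : ℝ := log x - digamma x - 1 / (2 * x)

theorem digammaRemainder_sub_add_one {x : ℝ} (hx : 0 < x) :
    digammaRemainder x - digammaRemainder (x + 1) = trapezoidError x := by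
  rw [digammaRemainder, digammaRemainder, trapezoidError, digamma_add_one hx]
  field_simp
  ring

theorem tendsto_digammaRemainder : Tendsto digammaRemainder atTop (𝓝 0) := by
  suffices Tendsto (fun y => digammaRemainder (y + 1)) atTop (𝓝 0) by
    refine (this.comp (tendsto_atTop_add_const_right _ (-1) tendsto_id)).congr fun y => ?_
    rw [Function.comp_apply, id, neg_add_cancel_right]
  have hlower : Tendsto (fun y : ℝ => -(1 / (2 * (y + 1)))) atTop (𝓝 0) := by
    have hden : Tendsto (fun y : ℝ => 2 * (y + 1)) atTop atTop :=
      (tendsto_atTop_add_const_right _ 1 tendsto_id).const_mul_atTop two_pos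
    simpa using (tendsto_const_nhds (x := (1 : ℝ)).div_atTop hden).neg
  have hbounds (y : ℝ) (hy : 0 < y) : -(1 / (2 * (y + 1))) ≤ digammaRemainder (y + 1) ∧
      digammaRemainder (y + 1) ≤ log (y + 1) - log y := by
    have hupper := digamma_le_log (show 0 < y + 1 by linarith)
    have hlower := log_le_digamma_add_one hy
    have : 0 < 1 / (2 * (y + 1)) := by positivity
    constructor <;> rw [digammaRemainder] <;> linarith
  exact tendsto_of_tendsto_of_tendsto_of_le_of_le' hlower (tendsto_log_comp_add_sub_log 1)
    ((eventually_gt_atTop 0).mono fun y hy => (hbounds y hy).1)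
    ((eventually_gt_atTop 0).mono fun y hy => (hbounds y hy).2)

theorem hasSum_trapezoidError {x : ℝ} (hx : 0 < x) :
    HasSum (fun n : ℕ => trapezoidError (x + n)) (digammaRemainder x) := by
  have hstep (n : ℕ) : digammaRemainder (x + n) - digammaRemainder (x + (n + 1 : ℕ)) =
      trapezoidError (x + n) := by
    rw [Nat.cast_succ, ← add_assoc]
    exact digammaRemainder_sub_add_one (by positivity)
  have hanti : Antitone fun n : ℕ => digammaRemainder (x + n) :=
    antitone_nat_of_succ_le fun n => by
      linarith [hstep n, trapezoidError_pos (show 0 < x + n by positivity)]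
  have hlim := tendsto_digammaRemainder.comp
    (tendsto_atTop_add_const_left _ x tendsto_natCast_atTop_atTop)
  simpa only [hstep, Nat.cast_zero, add_zero] using hanti.hasSum_sub_succ hlim

theorem digammaRemainder_pos {x : ℝ} (hx : 0 < x) : 0 < digammaRemainder x :=
  hasSum_lt (f := 0) (i := 0) (fun n => (trapezoidError_pos (by positivity)).le)
    (by simpa using trapezoidError_pos hx) hasSum_zero (hasSum_trapezoidError hx)

theorem digammaRemainder_le {x : ℝ} (hx : 0 < x) : digammaRemainder x ≤ (x ^ 2)⁻¹ / 12 := by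
  have hlim : Tendsto (fun n : ℕ => ((x + n) ^ 2)⁻¹ / 12) atTop (𝓝 0) := by
    simpa using (tendsto_inv_atTop_zero.comp ((tendsto_pow_atTop two_ne_zero).comp
      (tendsto_atTop_add_const_left _ x tendsto_natCast_atTop_atTop))).div_const 12
  have hanti : Antitone fun n : ℕ => ((x + n) ^ 2)⁻¹ / 12 := fun m n hmn => by
    have : (m : ℝ) ≤ n := Nat.cast_le.2 hmn
    dsimp only
    gcongr
  have htele := hanti.hasSum_sub_succ hlim
  simp only [Nat.cast_zero, add_zero, Nat.cast_succ, ← add_assoc] at htele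
  exact hasSum_le (fun n => (trapezoidError_lt (by positivity)).le)
    (hasSum_trapezoidError hx) htele

/-- For every `x > 0`, `0 < x² (log x − Ψ(x) − 1/(2x)) ≤ 1/12`. -/
theorem digamma_log_bound_second_order (x : ℝ) (hx : 0 < x) :
    0 < x ^ 2 * (log x - digamma x - 1 / (2 * x)) ∧
      x ^ 2 * (log x - digamma x - 1 / (2 * x)) ≤ 1 / 12 := by
  change 0 < x ^ 2 * digammaRemainder x ∧ x ^ 2 * digammaRemainder x ≤ 1 / 12
  have hx2 : 0 < x ^ 2 := by positivity
  refine ⟨mul_pos hx2 (digammaRemainder_pos hx), ?_⟩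
  calc x ^ 2 * digammaRemainder x ≤ x ^ 2 * ((x ^ 2)⁻¹ / 12) :=
        mul_le_mul_of_nonneg_left (digammaRemainder_le hx) hx2.le
    _ = 1 / 12 := by field_simp
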